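/- Every linear hypergraph in which every vertex has degree at most 2 has a line representation. -/

import Mathlib

set_option maxRecDepth 8000

abbrev Pt : Type := ℝ × ℝ

def IsLine (L : Set Pt) : Prop :=
  ∃ a b : Pt, a ≠ b ∧ L = (affineSpan ℝ {a, b} : Set Pt)

def IsSegment (S : Set Pt) : Prop :=
  ∃ a b : Pt, a ≠ b ∧ S = segment ℝ a b

structure LineHypergraph (ι : Type) where
  V : Finset ι
  E : Finset (Finset ι)
  edge_nonempty : ∀ e ∈ E, e.Nonempty
  edge_subset : ∀ e ∈ E, e ⊆ V

structure LineRep {ι : Type} (H : LineHypergraph ι) where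
  α : ι → Pt
  β : Finset ι → Set Pt
  α_inj : Set.InjOn α ↑H.V
  β_inj : Set.InjOn β ↑H.E
  β_isLine : ∀ e ∈ H.E, IsLine (β e)
  incidence : ∀ v ∈ H.V, ∀ e ∈ H.E, (v ∈ e ↔ α v ∈ β e)

structure SegmentRep {ι : Type} (H : LineHypergraph ι) where
  α : ι → Pt
  β : Finset ι → Set Pt
  α_inj : Set.InjOn α ↑H.V
  β_inj : Set.InjOn β ↑H.E
  β_isSegment : ∀ e ∈ H.E, IsSegment (β e)
  incidence : ∀ v ∈ H.V, ∀ e ∈ H.E, (v ∈ e ↔ α v ∈ β e)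

def SegmentRep.Strict {ι : Type} {H : LineHypergraph ι} (R : SegmentRep H) : Prop :=
  ∀ e ∈ H.E, ∀ e' ∈ H.E, e ≠ e' → (R.β e ∩ R.β e').Subsingleton

def LineRep.CrossingFree {ι : Type} {H : LineHypergraph ι} (R : LineRep H) : Prop :=
  ∀ e ∈ H.E, ∀ e' ∈ H.E, ((R.β e ∩ R.β e').Nonempty ↔ ∃ v, v ∈ e ∧ v ∈ e')

def SegmentRep.CrossingFree {ι : Type} {H : LineHypergraph ι} (R : SegmentRep H) : Prop :=
  ∀ e ∈ H.E, ∀ e' ∈ H.E, ((R.β e ∩ R.β e').Nonempty ↔ ∃ v, v ∈ e ∧ v ∈ e')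

/-!
Put the edges on tangent lines of the parabola `y = x²` with pairwise distinct tangency
parameters. The tangents at `a ≠ b` meet at `((a + b) / 2, a b)`, and this point lies on the
tangent at `t` iff `(t - a) (t - b) = 0`. So a vertex goes to the meeting point of the tangents of
its edges, padded by one or two fresh parameters of its own if its degree is below 2. Distinct
vertices get distinct parameter pairs: a fresh parameter is never shared, and two vertices lying
on the same two edges contradict linearity.
-/

open Finset

lemma isLine_setOf_snd_eq (m c : ℝ) : IsLine {p : Pt | p.2 = m * p.1 + c} := by
  refine ⟨(0, c), (1, m + c), by simp, ?_⟩
  ext ⟨x, y⟩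
  simp only [Set.mem_ofPred_eq, SetLike.mem_coe, mem_affineSpan_pair_iff_exists_lineMap_eq,
    AffineMap.lineMap_apply_module, Prod.smul_mk, Prod.mk_add_mk, smul_eq_mul, Prod.mk.injEq]
  constructor
  · rintro rfl
    exact ⟨x, by ring, by ring⟩
  · rintro ⟨r, rfl, rfl⟩
    ring

def tangentLine (t : ℝ) : Set Pt := {p | p.2 = 2 * t * p.1 - t ^ 2}

lemma isLine_tangentLine (t : ℝ) : IsLine (tangentLine t) := by
  simpa only [tangentLine, sub_eq_add_neg] using isLine_setOf_snd_eq (2 * t) (-t ^ 2)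

lemma mem_tangentLine_self (t : ℝ) : ((t, t ^ 2) : Pt) ∈ tangentLine t := by
  simp only [tangentLine, Set.mem_ofPred_eq]
  ring

lemma tangentLine_injective : Function.Injective tangentLine := by
  intro s t h
  have hs : s ^ 2 = 2 * t * s - t ^ 2 :=
    show ((s, s ^ 2) : Pt) ∈ tangentLine t from h ▸ mem_tangentLine_self s
  have : (s - t) ^ 2 = 0 := by linear_combination hs
  exact sub_eq_zero.mp (pow_eq_zero_iff two_ne_zero |>.mp this)

noncomputable def pairPoint (S : Finset ℝ) : Pt := ((∑ x ∈ S, x) / 2, ∏ x ∈ S, x)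

lemma pairPoint_mem_tangentLine_iff {S : Finset ℝ} (hS : #S = 2) (t : ℝ) :
    pairPoint S ∈ tangentLine t ↔ t ∈ S := by
  obtain ⟨a, b, hab, rfl⟩ := Finset.card_eq_two.mp hS
  have vieta : a * b = 2 * t * ((a + b) / 2) - t ^ 2 ↔ (t - a) * (t - b) = 0 :=
    ⟨fun h => by linear_combination h, fun h => by linear_combination h⟩
  simp only [pairPoint, tangentLine, Set.mem_ofPred_eq, sum_pair hab, prod_pair hab, vieta,
    mul_eq_zero, sub_eq_zero, mem_insert, mem_singleton]

lemma pairPoint_injOn : Set.InjOn pairPoint {S | #S = 2} := by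
  intro S hS T hT h
  ext t
  rw [← pairPoint_mem_tangentLine_iff hS, ← pairPoint_mem_tangentLine_iff hT, h]

namespace LineHypergraph

variable {ι : Type} (H : LineHypergraph ι)

def IsLinear [DecidableEq ι] : Prop := ∀ e ∈ H.E, ∀ e' ∈ H.E, e ≠ e' → #(e ∩ e') ≤ 1

lemma IsLinear.eq_of_mem_of_mem [DecidableEq ι] {H : LineHypergraph ι} (hH : H.IsLinear)
    {e e' : Finset ι} (he : e ∈ H.E) (he' : e' ∈ H.E) (hne : e ≠ e') {v w : ι}
    (hv : v ∈ e ∩ e') (hw : w ∈ e ∩ e') : v = w :=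
  Finset.card_le_one.mp (hH e he e' he' hne) v hv w hw

structure PairLabelling (K : Type) where
  edgeLabel : Finset ι → K
  vertexLabels : ι → Finset K
  vertexLabels_injOn : Set.InjOn vertexLabels H.V
  card_vertexLabels : ∀ v ∈ H.V, #(vertexLabels v) = 2
  edgeLabel_mem_iff : ∀ v ∈ H.V, ∀ e ∈ H.E, edgeLabel e ∈ vertexLabels v ↔ v ∈ e

namespace PairLabelling

variable {H} {K : Type}

section

variable (P : H.PairLabelling K)

lemma edgeLabel_injOn : Set.InjOn P.edgeLabel H.E := by
  intro e he e' he' h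
  ext v
  constructor
  · intro hv
    have hV := H.edge_subset e he hv
    rwa [← P.edgeLabel_mem_iff v hV e' he', ← h, P.edgeLabel_mem_iff v hV e he]
  · intro hv
    have hV := H.edge_subset e' he' hv
    rwa [← P.edgeLabel_mem_iff v hV e he, h, P.edgeLabel_mem_iff v hV e' he']

def labels : Set K := ⋃ v ∈ H.V, (P.vertexLabels v : Set K)

lemma labels_finite : P.labels.Finite :=
  H.V.finite_toSet.biUnion fun v _ => (P.vertexLabels v).finite_toSet

lemma vertexLabels_subset_labels {v : ι} (hv : v ∈ H.V) : (P.vertexLabels v : Set K) ⊆ P.labels :=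
  Set.subset_biUnion_of_mem (u := fun v => (P.vertexLabels v : Set K)) hv

lemma edgeLabel_mem_labels {e : Finset ι} (he : e ∈ H.E) : P.edgeLabel e ∈ P.labels := by
  obtain ⟨v, hv⟩ := H.edge_nonempty e he
  have hV := H.edge_subset e he hv
  exact P.vertexLabels_subset_labels hV ((P.edgeLabel_mem_iff v hV e he).mpr hv)

def map {K' : Type} [DecidableEq K'] (g : K → K') (hg : Set.InjOn g P.labels) :
    H.PairLabelling K' where
  edgeLabel := g ∘ P.edgeLabel
  vertexLabels v := (P.vertexLabels v).image g
  vertexLabels_injOn v hv w hw h := by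
    have h' : g '' (P.vertexLabels v : Set K) = g '' (P.vertexLabels w : Set K) := by
      simpa only [coe_image] using congrArg (fun s : Finset K' => (s : Set K')) h
    exact P.vertexLabels_injOn hv hw <| Finset.coe_injective <|
      (hg.image_eq_image_iff (P.vertexLabels_subset_labels hv)
        (P.vertexLabels_subset_labels hw)).mp h'
  card_vertexLabels v hv := by
    rw [card_image_of_injOn (hg.mono (P.vertexLabels_subset_labels hv)), P.card_vertexLabels v hv]
  edgeLabel_mem_iff v hv e he := by
    rw [Function.comp_apply, ← mem_coe, coe_image,
      hg.mem_image_iff (P.vertexLabels_subset_labels hv) (P.edgeLabel_mem_labels he), mem_coe,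
      P.edgeLabel_mem_iff v hv e he]

end

lemma nonempty_real (P : H.PairLabelling K) : Nonempty (H.PairLabelling ℝ) := by
  obtain ⟨f, hf⟩ := Set.countable_iff_exists_injOn.mp P.labels_finite.countable
  exact ⟨P.map (fun x => (f x : ℝ)) (Nat.cast_injective.comp_injOn hf)⟩

end PairLabelling

variable [DecidableEq ι]

def incidentEdges (v : ι) : Finset (Finset ι) := H.E.filter (v ∈ ·)

def paddedLabels (v : ι) : Finset (Finset ι ⊕ ι × ℕ) :=
  (H.incidentEdges v).disjSum ({v} ×ˢ range (2 - #(H.incidentEdges v)))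

lemma inl_mem_paddedLabels {v : ι} {e : Finset ι} :
    Sum.inl e ∈ H.paddedLabels v ↔ e ∈ H.E ∧ v ∈ e := by
  simp [paddedLabels, incidentEdges]

lemma inr_mem_paddedLabels {v w : ι} {k : ℕ} :
    Sum.inr (w, k) ∈ H.paddedLabels v ↔ w = v ∧ k < 2 - #(H.incidentEdges v) := by
  simp [paddedLabels, and_comm, eq_comm]

lemma card_paddedLabels {v : ι} (hv : #(H.incidentEdges v) ≤ 2) : #(H.paddedLabels v) = 2 := by
  simp only [paddedLabels, card_disjSum, card_product, card_singleton, card_range]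
  omega

lemma paddedLabels_injective (hH : H.IsLinear) : Function.Injective H.paddedLabels := by
  intro v w h
  have private_label {v w : ι} (h : H.paddedLabels v = H.paddedLabels w)
      (hv : #(H.incidentEdges v) < 2) : v = w :=
    (H.inr_mem_paddedLabels.mp (h ▸ H.inr_mem_paddedLabels.mpr ⟨rfl, by omega⟩ :
      Sum.inr (v, 0) ∈ H.paddedLabels w)).1
  by_cases hv : #(H.incidentEdges v) < 2
  · exact private_label h hv
  by_cases hw : #(H.incidentEdges w) < 2
  · exact (private_label h.symm hw).symm
  obtain ⟨e, he, e', he', hne⟩ := Finset.one_lt_card.mp (by omega : 1 < #(H.incidentEdges v))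
  have mem_of_incident {f : Finset ι} (hf : f ∈ H.incidentEdges v) : f ∈ H.E ∧ v ∈ f ∧ w ∈ f := by
    obtain ⟨hfE, hvf⟩ := mem_filter.mp hf
    exact ⟨hfE, hvf, (H.inl_mem_paddedLabels.mp (h ▸ H.inl_mem_paddedLabels.mpr ⟨hfE, hvf⟩)).2⟩
  obtain ⟨heE, hve, hwe⟩ := mem_of_incident he
  obtain ⟨he'E, hve', hwe'⟩ := mem_of_incident he'
  exact hH.eq_of_mem_of_mem heE he'E hne (mem_inter.mpr ⟨hve, hve'⟩) (mem_inter.mpr ⟨hwe, hwe'⟩)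

def paddedLabelling (hH : H.IsLinear) (hdeg : ∀ v ∈ H.V, #(H.incidentEdges v) ≤ 2) :
    H.PairLabelling (Finset ι ⊕ ι × ℕ) where
  edgeLabel := Sum.inl
  vertexLabels := H.paddedLabels
  vertexLabels_injOn := (H.paddedLabels_injective hH).injOn
  card_vertexLabels v hv := H.card_paddedLabels (hdeg v hv)
  edgeLabel_mem_iff v _ e he := by rw [inl_mem_paddedLabels]; exact and_iff_right he

end LineHypergraph

noncomputable def LineRep.ofPairLabelling {ι : Type} {H : LineHypergraph ι}
    (P : H.PairLabelling ℝ) : LineRep H where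
  α v := pairPoint (P.vertexLabels v)
  β e := tangentLine (P.edgeLabel e)
  α_inj := pairPoint_injOn.comp P.vertexLabels_injOn P.card_vertexLabels
  β_inj := tangentLine_injective.comp_injOn P.edgeLabel_injOn
  β_isLine e _ := isLine_tangentLine _
  incidence v hv e he := by
    rw [pairPoint_mem_tangentLine_iff (P.card_vertexLabels v hv), P.edgeLabel_mem_iff v hv e he]

theorem stmt5 {ι : Type} [DecidableEq ι] (H : LineHypergraph ι)
    (hlin : ∀ e ∈ H.E, ∀ e' ∈ H.E, e ≠ e' → (e ∩ e').card ≤ 1)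
    (hdeg : ∀ v ∈ H.V, (H.E.filter (fun e => v ∈ e)).card ≤ 2) :
    Nonempty (LineRep H) := by
  obtain ⟨P⟩ := (H.paddedLabelling hlin hdeg).nonempty_real
  exact ⟨LineRep.ofPairLabelling P⟩
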